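/- arXiv:2511.10359 — 2 statements merged into one kernel-verified Lean document; each statement's English description precedes it below -/
import Mathlib

section
/- Let z ∈ ℂ with |z| > 1, δ > 0, and let p_1 < ⋯ < p_r be integers with p_{i+1} − p_i ≥ δ. Suppose c_1, …, c_r ∈ {−2, 0, 2} are not all zero and Σ_{k=1}^{r} c_k z^{p_k} = 0. Then |z|^δ ≤ 2. -/
/-!
Let `L` be the largest index with `c_L ≠ 0`. Cancellation forces the leading term to be dominated
by the earlier ones: `2 |z|^{p_L} ≤ ∑_{k<L} 2 |z|^{p_k}`. The spacing makes `w_k = |z|^{p_k}` grow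
at least geometrically with ratio `t = |z|^δ`, so `(t - 1) ∑_{k<L} w_k ≤ w_L ≤ ∑_{k<L} w_k`,
whence `t ≤ 2`.
-/

open Finset

theorem exists_norm_le_sum_Ico_norm_of_sum_Icc_eq_zero {E : Type*} [SeminormedAddCommGroup E]
    {f : ℕ → E} {r : ℕ} (hf : ∑ k ∈ Icc 1 r, f k = 0) (hne : ∃ k ∈ Icc 1 r, f k ≠ 0) :
    ∃ L ∈ Icc 1 r, f L ≠ 0 ∧ ‖f L‖ ≤ ∑ k ∈ Ico 1 L, ‖f k‖ := by
  classical
  set S := (Icc 1 r).filter (fun k => f k ≠ 0)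
  have hS : S.Nonempty := by simpa [S, Finset.Nonempty] using hne
  obtain ⟨hLmem, hfL⟩ := mem_filter.1 (S.max'_mem hS)
  set L := S.max' hS
  have hL1 : 1 ≤ L := (mem_Icc.1 hLmem).1
  have htail : ∀ k ∈ Icc 1 r, k ∉ Icc 1 L → f k = 0 := fun k hk hkL => by
    by_contra hfk
    exact hkL (mem_Icc.2 ⟨(mem_Icc.1 hk).1, S.le_max' k (mem_filter.2 ⟨hk, hfk⟩)⟩)
  have hsumL : ∑ k ∈ Ico 1 L, f k + f L = 0 := by
    rw [← sum_Ico_succ_top hL1, Ico_add_one_right_eq_Icc, ← hf]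
    exact sum_subset (Icc_subset_Icc_right (mem_Icc.1 hLmem).2) htail
  refine ⟨L, hLmem, hfL, ?_⟩
  calc ‖f L‖ = ‖∑ k ∈ Ico 1 L, f k‖ := by rw [eq_neg_of_add_eq_zero_right hsumL, norm_neg]
    _ ≤ ∑ k ∈ Ico 1 L, ‖f k‖ := norm_sum_le _ _

theorem sub_one_mul_sum_Ico_le {w : ℕ → ℝ} {t : ℝ} {m n : ℕ} (hmn : m ≤ n) (hm : 0 ≤ w m)
    (hstep : ∀ k, m ≤ k → k < n → t * w k ≤ w (k + 1)) :
    (t - 1) * ∑ k ∈ Ico m n, w k ≤ w n := by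
  induction n, hmn using Nat.le_induction with
  | base => simpa using hm
  | succ n hmn ih =>
    rw [sum_Ico_succ_top hmn]
    linarith [ih fun k hmk hkn => hstep k hmk (by omega), hstep n hmn (by omega)]

theorem Real.rpow_mul_zpow_le_zpow {a δ : ℝ} (ha : 1 ≤ a) {m n : ℤ} (h : δ ≤ n - m) :
    a ^ δ * a ^ m ≤ a ^ n := by
  rw [← Real.rpow_intCast, ← Real.rpow_intCast, ← Real.rpow_add (by linarith)]
  exact Real.rpow_le_rpow_of_exponent_le ha (by linarith)

theorem stmt_8_general (z : ℂ) (hz : 1 < ‖z‖) (δ : ℝ)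
    (r : ℕ) (p : ℕ → ℤ)
    (hspace : ∀ i, 1 ≤ i → i < r → ((p (i + 1) : ℝ) - p i) ≥ δ)
    (c : ℕ → ℤ) (hc : ∀ k ∈ Finset.Icc 1 r, c k = -2 ∨ c k = 0 ∨ c k = 2)
    (hne : ∃ k ∈ Finset.Icc 1 r, c k ≠ 0)
    (hsum : ∑ k ∈ Finset.Icc 1 r, (c k : ℂ) * z ^ (p k) = 0) :
    (‖z‖) ^ δ ≤ 2 := by
  have hz0 : z ≠ 0 := norm_pos_iff.1 (by linarith)
  have hnorm : ∀ k, ‖(c k : ℂ) * z ^ p k‖ = |(c k : ℝ)| * ‖z‖ ^ p k := fun k => by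
    rw [norm_mul, norm_zpow, Complex.norm_intCast]
  obtain ⟨L, hL, hfL, hdom⟩ := exists_norm_le_sum_Ico_norm_of_sum_Icc_eq_zero hsum <| by
    obtain ⟨k, hk, hck⟩ := hne
    exact ⟨k, hk, mul_ne_zero (Int.cast_ne_zero.2 hck) (zpow_ne_zero _ hz0)⟩
  obtain ⟨hL1, hLr⟩ := mem_Icc.1 hL
  have hcL : |(c L : ℝ)| = 2 := by
    rcases hc L hL with h | h | h <;> simp [h] at hfL ⊢
  have hlead : ‖z‖ ^ p L ≤ ∑ k ∈ Ico 1 L, ‖z‖ ^ p k := by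
    have hcoeff : ∀ k ∈ Ico 1 L, |(c k : ℝ)| ≤ 2 := fun k hk => by
      rcases hc k ((Ico_subset_Icc_self.trans (Icc_subset_Icc_right hLr)) hk) with h | h | h <;>
        simp [h]
    have := calc 2 * ‖z‖ ^ p L = ‖(c L : ℂ) * z ^ p L‖ := by rw [hnorm, hcL]
      _ ≤ ∑ k ∈ Ico 1 L, ‖(c k : ℂ) * z ^ p k‖ := hdom
      _ ≤ ∑ k ∈ Ico 1 L, 2 * ‖z‖ ^ p k := sum_le_sum fun k hk => by
          rw [hnorm]; gcongr; exact hcoeff k hk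
      _ = 2 * ∑ k ∈ Ico 1 L, ‖z‖ ^ p k := (mul_sum _ _ _).symm
    linarith
  have hgrowth := sub_one_mul_sum_Ico_le (w := fun k => ‖z‖ ^ p k) (t := ‖z‖ ^ δ) hL1
    (zpow_nonneg (norm_nonneg z) _)
    fun k hk hkL => Real.rpow_mul_zpow_le_zpow hz.le (by linarith [hspace k hk (by omega)])
  have hwL : 0 < ‖z‖ ^ p L := zpow_pos (by linarith) _
  nlinarith

theorem stmt_8 (z : ℂ) (hz : 1 < ‖z‖) (δ : ℝ) (hδ : 0 < δ)
    (r : ℕ) (hr : 1 ≤ r) (p : ℕ → ℤ)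
    (hspace : ∀ i, 1 ≤ i → i < r → ((p (i + 1) : ℝ) - p i) ≥ δ)
    (c : ℕ → ℤ) (hc : ∀ k ∈ Finset.Icc 1 r, c k = -2 ∨ c k = 0 ∨ c k = 2)
    (hne : ∃ k ∈ Finset.Icc 1 r, c k ≠ 0)
    (hsum : ∑ k ∈ Finset.Icc 1 r, (c k : ℂ) * z ^ (p k) = 0) :
    (‖z‖) ^ δ ≤ 2 :=
  stmt_8_general z hz δ r p hspace c hc hne hsum
end

section
/- Let p be a prime, and let P ∈ ℤ[X] be a polynomial of degree N−1 with leading and constant coefficients ±1. Suppose Q(X) = P(X+1) = Σ_{l=0}^{N−1} g_l X^l satisfies: v_p(g_l) ≥ 1 for all l ≤ N−2, v_p(g_{N−1}) = 0, and there exists j with 1 ≤ j ≤ m such that v_p(g_j) = 1 (where v_p denotes p-adic valuation). Then the Newton polygon of Q over ℚ_p has a segment of slope with denominator at least N−1−j in lowest terms when the segment from (j, 1) to (N−1, 0) has horizontal length N−1−j and height 1 with gcd(1, N−1−j) = 1; consequently Q (and hence P) has an irreducible factor over ℚ_p of degree at least N−1−j. -/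
/-!
Over `ℤ_[p]`, `Q` is a unit times a monic polynomial whose non-leading coefficients lie in `(p)`,
i.e. which is `X ^ (N - 1)` mod `p`. By Gauss's lemma a factorisation over `ℚ_[p]` can be taken to
consist of monic factors over `ℤ_[p]`, and these are again powers of `X` mod `p`. In the `j`-th
coefficient of a product `g * h` of such factors, every term `g_a h_b` with `a < deg g` and
`b < deg h` lies in `(p²)`; so if `p² ∤ (g h)_j`, then `p² ∤ h_(j - deg g)` or `p² ∤ g_(j - deg h)`.
Descending to an irreducible factor `r` keeps `j - (N - 1 - deg r)` a valid coefficient index, so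
`deg r ≥ N - 1 - j`. Finally `P(X) = Q(X - 1)`, and the shift preserves irreducibility and degree.
-/

open Polynomial IsLocalRing

namespace Polynomial

variable {R : Type*} [CommRing R] {I : Ideal R}

lemma IsWeaklyEisensteinAt.isDistinguishedAt_C_mul {f : R[X]} (hf : f.IsWeaklyEisensteinAt I)
    {u : Rˣ} (hu : f.leadingCoeff = u) : (C (↑u⁻¹ : R) * f).IsDistinguishedAt I where
  mem hn := by
    rw [coeff_C_mul]
    exact I.mul_mem_left _ (hf.mem (by rwa [natDegree_C_mul_of_isUnit u⁻¹.isUnit] at hn))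
  monic := monic_C_mul_of_mul_leadingCoeff_eq_one (by rw [hu, Units.inv_mul])

namespace IsDistinguishedAt

lemma of_dvd [I.IsPrime] {f g : R[X]} (hf : f.IsDistinguishedAt I) (hg : g.Monic) (hgf : g ∣ f) :
    g.IsDistinguishedAt I where
  monic := hg
  mem {n} hn := by
    have hdvd : g.map (Ideal.Quotient.mk I) ∣ X ^ f.natDegree :=
      hf.map_eq_X_pow ▸ Polynomial.map_dvd _ hgf
    obtain ⟨i, -, hassoc⟩ := (dvd_prime_pow prime_X _).mp hdvd
    have heq : g.map (Ideal.Quotient.mk I) = X ^ i :=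
      eq_of_monic_of_associated (hg.map _) (monic_X_pow i) hassoc
    have hi : g.natDegree = i := by
      simpa [hg.natDegree_map] using congrArg natDegree heq
    rw [← Ideal.Quotient.eq_zero_iff_mem, ← coeff_map, heq, coeff_X_pow, if_neg (by omega)]

lemma coeff_notMem_sq_of_coeff_mul_notMem_sq {f g : R[X]} (hf : f.IsDistinguishedAt I)
    (hg : g.IsDistinguishedAt I) {j : ℕ} (hj : (f * g).coeff j ∉ I ^ 2) :
    (f.natDegree ≤ j ∧ g.coeff (j - f.natDegree) ∉ I ^ 2) ∨
      (g.natDegree ≤ j ∧ f.coeff (j - g.natDegree) ∉ I ^ 2) := by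
  by_contra! h
  refine hj (coeff_mul f g j ▸ Ideal.sum_mem _ fun ⟨a, b⟩ hab => ?_)
  have hab : a + b = j := Finset.HasAntidiagonal.mem_antidiagonal.mp hab
  rcases lt_trichotomy a f.natDegree with ha | rfl | ha
  · rcases lt_trichotomy b g.natDegree with hb | rfl | hb
    · exact pow_two I ▸ Ideal.mul_mem_mul (hf.mem ha) (hg.mem hb)
    · rw [hg.monic.coeff_natDegree, mul_one]
      convert h.2 (by omega) using 2
      omega
    · rw [coeff_eq_zero_of_natDegree_lt hb, mul_zero]
      exact (I ^ 2).zero_mem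
  · rw [hf.monic.coeff_natDegree, one_mul]
    convert h.1 (by omega) using 2
    omega
  · rw [coeff_eq_zero_of_natDegree_lt ha, zero_mul]
    exact (I ^ 2).zero_mem

theorem exists_irreducible_dvd_map_natDegree_sub_le [IsDomain R] [IsIntegrallyClosed R]
    (K : Type*) [Field K] [Algebra R K] [IsFractionRing R K] [I.IsPrime] {f : R[X]}
    (hf : f.IsDistinguishedAt I) {j : ℕ} (hj : j < f.natDegree) (hcoeff : f.coeff j ∉ I ^ 2) :
    ∃ r : K[X], Irreducible r ∧ r ∣ f.map (algebraMap R K) ∧ f.natDegree - j ≤ r.natDegree := by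
  induction hn : f.natDegree using Nat.strong_induction_on generalizing f j with
  | _ n ih =>
  by_cases hirr : Irreducible f
  · refine ⟨f.map (algebraMap R K), ?_, dvd_rfl, by rw [hf.monic.natDegree_map]; omega⟩
    exact hf.monic.irreducible_iff_irreducible_map_fraction_map.mp hirr
  have hf1 : f ≠ 1 := by rintro rfl; simp at hj
  obtain ⟨g, h, hg, hh, rfl, hg0, hh0⟩ : ∃ g h : R[X], g.Monic ∧ h.Monic ∧ g * h = f ∧
      g.natDegree ≠ 0 ∧ h.natDegree ≠ 0 := by
    simpa [hf.monic.irreducible_iff_natDegree, hf1] using hirr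
  have hgh := hg.natDegree_mul hh
  have hgd := hf.of_dvd hg (dvd_mul_right g h)
  have hhd := hf.of_dvd hh (dvd_mul_left h g)
  rcases hgd.coeff_notMem_sq_of_coeff_mul_notMem_sq hhd hcoeff with ⟨hle, hc⟩ | ⟨hle, hc⟩
  · obtain ⟨r, hr, hrh, hrdeg⟩ := ih h.natDegree (by omega) hhd (by omega) hc rfl
    exact ⟨r, hr, hrh.trans (Polynomial.map_dvd _ (dvd_mul_left h g)), by omega⟩
  · obtain ⟨r, hr, hrg, hrdeg⟩ := ih g.natDegree (by omega) hgd (by omega) hc rfl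
    exact ⟨r, hr, hrg.trans (Polynomial.map_dvd _ (dvd_mul_right g h)), by omega⟩

end IsDistinguishedAt

end Polynomial

theorem PadicInt.intCast_mem_maximalIdeal_pow_iff {p : ℕ} [Fact p.Prime] (n : ℕ) (z : ℤ) :
    (z : ℤ_[p]) ∈ maximalIdeal ℤ_[p] ^ n ↔ (p : ℤ) ^ n ∣ z := by
  rw [maximalIdeal_eq_span_p, Ideal.span_singleton_pow, Ideal.mem_span_singleton,
    pow_p_dvd_int_iff]

namespace Polynomial

theorem exists_irreducible_dvd_map_padic_of_not_sq_dvd_coeff (p : ℕ) [Fact p.Prime] {Q : ℤ[X]}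
    (htop : ¬ (p : ℤ) ∣ Q.coeff Q.natDegree) (hlow : ∀ l < Q.natDegree, (p : ℤ) ∣ Q.coeff l)
    {j : ℕ} (hj : j < Q.natDegree) (hcoeff : ¬ (p : ℤ) ^ 2 ∣ Q.coeff j) :
    ∃ r : ℚ_[p][X], Irreducible r ∧ r ∣ Q.map (Int.castRingHom ℚ_[p]) ∧
      Q.natDegree - j ≤ r.natDegree := by
  set Qp := Q.map (Int.castRingHom ℤ_[p])
  have hdeg : Qp.natDegree = Q.natDegree := natDegree_map_eq_of_injective (RingHom.injective_int _) _
  have hmem (n l : ℕ) : Qp.coeff l ∈ maximalIdeal ℤ_[p] ^ n ↔ (p : ℤ) ^ n ∣ Q.coeff l := by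
    simpa [Qp] using PadicInt.intCast_mem_maximalIdeal_pow_iff n (Q.coeff l)
  have hunit : IsUnit Qp.leadingCoeff := by
    rwa [← notMem_maximalIdeal, ← pow_one (maximalIdeal _), leadingCoeff, hdeg, hmem, pow_one]
  have hQp : Qp.IsWeaklyEisensteinAt (maximalIdeal ℤ_[p]) :=
    ⟨fun hl => pow_one (maximalIdeal ℤ_[p]) ▸ (hmem 1 _).mpr (by simpa using hlow _ (hdeg ▸ hl))⟩
  set M := C (↑hunit.unit⁻¹ : ℤ_[p]) * Qp
  have hM : M.IsDistinguishedAt (maximalIdeal ℤ_[p]) :=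
    hQp.isDistinguishedAt_C_mul hunit.unit_spec.symm
  have hMdeg : M.natDegree = Q.natDegree := by
    rw [natDegree_C_mul_of_isUnit (Units.isUnit _), hdeg]
  have hMj : M.coeff j ∉ maximalIdeal ℤ_[p] ^ 2 := by
    rwa [coeff_C_mul, Ideal.unit_mul_mem_iff_mem _ (Units.isUnit _), hmem]
  obtain ⟨r, hr, hrM, hrdeg⟩ :=
    hM.exists_irreducible_dvd_map_natDegree_sub_le ℚ_[p] (hMdeg ▸ hj) hMj
  have hcast : (algebraMap ℤ_[p] ℚ_[p]).comp (Int.castRingHom ℤ_[p]) = Int.castRingHom ℚ_[p] :=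
    RingHom.ext_int _ _
  have hMmap : M.map (algebraMap ℤ_[p] ℚ_[p]) =
      C (algebraMap ℤ_[p] ℚ_[p] ↑hunit.unit⁻¹) * Q.map (Int.castRingHom ℚ_[p]) := by
    simp [M, Qp, Polynomial.map_map, hcast]
  rw [hMmap, (isUnit_C.mpr ((Units.isUnit _).map _)).dvd_mul_left] at hrM
  exact ⟨r, hr, hrM, hMdeg ▸ hrdeg⟩

theorem exists_irreducible_dvd_of_dvd_taylor {R : Type*} [CommRing R] {f r : R[X]} {a : R}
    (hr : Irreducible r) (hrf : r ∣ taylor a f) :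
    ∃ s : R[X], Irreducible s ∧ s ∣ f ∧ s.natDegree = r.natDegree :=
  ⟨taylor (-a) r, (MulEquiv.irreducible_iff (taylorEquiv (-a))).mpr hr,
    by simpa [taylor_taylor] using _root_.map_dvd (taylorAlgHom (-a)) hrf, natDegree_taylor r (-a)⟩

end Polynomial

theorem stmt_16_general (p : ℕ) [Fact (Nat.Prime p)] (N m j : ℕ) (hN : 2 ≤ N)
    (hjm : j ≤ m) (hmN : m ≤ N - 2)
    (P : Polynomial ℤ) (hdeg : P.natDegree = N - 1)
    (Q : Polynomial ℤ) (hQ : Q = P.comp (Polynomial.X + 1))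
    (hval : ∀ l ≤ N - 2, (p : ℤ) ∣ Q.coeff l)
    (htop : ¬ (p : ℤ) ∣ Q.coeff (N - 1))
    (hj1 : (p : ℤ) ∣ Q.coeff j ∧ ¬ ((p : ℤ) ^ 2 ∣ Q.coeff j)) :
    ∃ R : Polynomial ℚ_[p], Irreducible R ∧
      R ∣ P.map (Int.castRingHom ℚ_[p]) ∧ N - 1 - j ≤ R.natDegree := by
  have hQ' : Q.map (Int.castRingHom ℚ_[p]) = taylor 1 (P.map (Int.castRingHom ℚ_[p])) := by
    rw [hQ, ← C_1, ← taylor_apply, map_taylor, map_one]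
  have hQdeg : Q.natDegree = N - 1 := by rw [hQ, ← C_1, ← taylor_apply, natDegree_taylor, hdeg]
  obtain ⟨r, hr, hrQ, hrdeg⟩ := exists_irreducible_dvd_map_padic_of_not_sq_dvd_coeff p
    (hQdeg ▸ htop) (fun l hl => hval l (by omega)) (by omega) hj1.2
  obtain ⟨s, hs, hsP, hsdeg⟩ := exists_irreducible_dvd_of_dvd_taylor hr (hQ' ▸ hrQ)
  exact ⟨s, hs, hsP, by omega⟩

theorem stmt_16 (p : ℕ) [Fact (Nat.Prime p)] (N m j : ℕ) (hN : 2 ≤ N)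
    (hj : 1 ≤ j) (hjm : j ≤ m) (hmN : m ≤ N - 2)
    (P : Polynomial ℤ) (hdeg : P.natDegree = N - 1)
    (hlead : P.leadingCoeff = 1 ∨ P.leadingCoeff = -1)
    (hconst : P.coeff 0 = 1 ∨ P.coeff 0 = -1)
    (Q : Polynomial ℤ) (hQ : Q = P.comp (Polynomial.X + 1))
    (hval : ∀ l ≤ N - 2, (p : ℤ) ∣ Q.coeff l)
    (htop : ¬ (p : ℤ) ∣ Q.coeff (N - 1))
    (hj1 : (p : ℤ) ∣ Q.coeff j ∧ ¬ ((p : ℤ) ^ 2 ∣ Q.coeff j)) :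
    ∃ R : Polynomial ℚ_[p], Irreducible R ∧
      R ∣ P.map (Int.castRingHom ℚ_[p]) ∧ N - 1 - j ≤ R.natDegree :=
  stmt_16_general p N m j hN hjm hmN P hdeg Q hQ hval htop hj1
end
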